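/- Approximate reduction to unit scale: let X be a normed space of dimension d ≥ 2 and L a positive integer. Then Γ(X) ≥ (L+2)^{-1} · ((2L)^{1/(L+1)}·(1 + L^{-1}))^{-d} · γ(X). -/

import Mathlib

open MeasureTheory Metric

/-- `ballsUnion μ C` is the measure of the union of the closed balls encoded (center, radius)
by the finite collection `C`. -/
noncomputable def ballsUnion {X : Type*} [NormedAddCommGroup X] [MeasurableSpace X]
    (μ : Measure X) (C : Finset (X × ℝ)) : ℝ :=
  (μ (⋃ p ∈ C, closedBall p.1 p.2)).toReal

/-- A collection of (center, radius) pairs encodes pairwise disjoint closed balls. -/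
def DisjointBalls {X : Type*} [NormedAddCommGroup X] (S : Finset (X × ℝ)) : Prop :=
  (S : Set (X × ℝ)).Pairwise fun p q => Disjoint (closedBall p.1 p.2) (closedBall q.1 q.2)

/-- `Phi μ C` is the largest fraction of the measure of the union of the balls of `C`
occupied by a pairwise disjoint subcollection of `C`. -/
noncomputable def Phi {X : Type*} [NormedAddCommGroup X] [MeasurableSpace X]
    (μ : Measure X) (C : Finset (X × ℝ)) : ℝ :=
  ⨆ S : {S : Finset (X × ℝ) // S ⊆ C ∧ DisjointBalls S},
    ballsUnion μ S.1 / ballsUnion μ C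

/-- `vitaliGamma μ S` is the optimal Vitali covering constant `Γ(X; S)` for finite
collections of closed balls with radii in `S`. -/
noncomputable def vitaliGamma {X : Type*} [NormedAddCommGroup X] [MeasurableSpace X]
    (μ : Measure X) (S : Set ℝ) : ℝ :=
  ⨅ C : {C : Finset (X × ℝ) // C.Nonempty ∧ ∀ p ∈ C, p.2 ∈ S}, Phi μ C.1

/-!
Round every radius up to a geometric grid `R / q ^ n` with `q = (2L)^{1/(L+1)}`, losing a factor
`q^d` in measure, and keep the residue class of the scales `n` mod `L + 1` that carries the largest
part of the union, losing a factor `L + 1`. Two distinct radii of that class differ by a factor at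
least `q^{L+1} = 2L`. Selecting balls radius by radius, from the largest down, the equal-radius
constant `γ` applies to the balls of the current radius that avoid all balls chosen before; the
others lie in the `(1 + 1/L)`-enlargements of the chosen balls, which cost a factor `(1 + 1/L)^d`.
Hence `Γ ≥ γ / ((L+1) (1 + γ (1+1/L)^d) q^d)`. Finally `γ 2^d ≤ 1`, since unit balls centred in
the unit ball pairwise meet and almost cover the ball of radius `2`; so the claimed bound follows
from this estimate for `L` itself when `γ (L+1) ≤ 1`, and for `L = 1` otherwise.
-/

open Set
open scoped Pointwise ENNReal

section DisjointSubfamilies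

variable {X : Type*} [NormedAddCommGroup X] [MeasurableSpace X] (μ : Measure X)

instance finite_disjointSubfamily (C : Finset (X × ℝ)) :
    Finite {S : Finset (X × ℝ) // S ⊆ C ∧ DisjointBalls S} :=
  Finite.of_injective (fun S => (⟨S.1, Finset.mem_powerset.2 S.2.1⟩ : C.powerset))
    fun _ _ h => Subtype.ext (by simpa using congrArg Subtype.val h)

lemma Phi_nonneg (C : Finset (X × ℝ)) : 0 ≤ Phi μ C :=
  Real.iSup_nonneg fun _ => div_nonneg ENNReal.toReal_nonneg ENNReal.toReal_nonneg

lemma vitaliGamma_nonneg (R : Set ℝ) : 0 ≤ vitaliGamma μ R :=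
  Real.iInf_nonneg fun C => Phi_nonneg μ C.1

lemma div_ballsUnion_le_Phi {C S : Finset (X × ℝ)} (hSC : S ⊆ C) (hS : DisjointBalls S) :
    ballsUnion μ S / ballsUnion μ C ≤ Phi μ C :=
  le_ciSup (f := fun S : {S : Finset (X × ℝ) // S ⊆ C ∧ DisjointBalls S} =>
      ballsUnion μ S.1 / ballsUnion μ C) (Set.finite_range _).bddAbove
    (⟨S, hSC, hS⟩ : {S : Finset (X × ℝ) // S ⊆ C ∧ DisjointBalls S})

lemma vitaliGamma_le_Phi {R : Set ℝ} {C : Finset (X × ℝ)} (hC : C.Nonempty)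
    (hR : ∀ p ∈ C, p.2 ∈ R) : vitaliGamma μ R ≤ Phi μ C :=
  ciInf_le ⟨0, by rintro _ ⟨D, rfl⟩; exact Phi_nonneg μ D.1⟩
    (⟨C, hC, hR⟩ : {C : Finset (X × ℝ) // C.Nonempty ∧ ∀ p ∈ C, p.2 ∈ R})

lemma exists_disjointBalls_vitaliGamma_mul_le {R : Set ℝ} (C : Finset (X × ℝ))
    (hR : ∀ p ∈ C, p.2 ∈ R) :
    ∃ S ⊆ C, DisjointBalls S ∧ vitaliGamma μ R * ballsUnion μ C ≤ ballsUnion μ S := by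
  have hempty : DisjointBalls (∅ : Finset (X × ℝ)) := by simp [DisjointBalls]
  rcases C.eq_empty_or_nonempty with rfl | hC
  · exact ⟨∅, subset_rfl, hempty, by simp [ballsUnion]⟩
  have : Nonempty {S : Finset (X × ℝ) // S ⊆ C ∧ DisjointBalls S} :=
    ⟨⟨∅, C.empty_subset, hempty⟩⟩
  obtain ⟨S, hS⟩ := exists_eq_ciSup_of_finite
    (f := fun S : {S : Finset (X × ℝ) // S ⊆ C ∧ DisjointBalls S} =>
      ballsUnion μ S.1 / ballsUnion μ C)
  refine ⟨S.1, S.2.1, S.2.2, mul_le_of_le_div₀ ENNReal.toReal_nonneg ENNReal.toReal_nonneg ?_⟩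
  simpa only [Phi, ← hS] using vitaliGamma_le_Phi μ hC hR

end DisjointSubfamilies

section Balls

variable {X : Type*} [NormedAddCommGroup X]

lemma closedBall_eq_smul_closedBall_one [NormedSpace ℝ X] (x : X) {r : ℝ} (hr : 0 < r) :
    closedBall x r = r • closedBall (r⁻¹ • x) 1 := by
  rw [_root_.smul_closedBall _ _ zero_le_one, smul_inv_smul₀ hr.ne', Real.norm_of_nonneg hr.le,
    mul_one]

lemma closedBall_subset_closedBall_of_not_disjoint {x y : X} {r s : ℝ}
    (h : ¬Disjoint (closedBall x r) (closedBall y s)) :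
    closedBall x r ⊆ closedBall y (s + 2 * r) := by
  refine closedBall_subset_closedBall' ?_
  have := dist_le_add_of_nonempty_closedBall_inter_closedBall
    (Set.not_disjoint_iff_nonempty_inter.1 h)
  linarith

lemma measure_biUnion_closedBall_ne_top [MeasurableSpace X] [ProperSpace X] (μ : Measure X)
    [IsFiniteMeasureOnCompacts μ] {ι : Type*} (I : Finset ι) (c : ι → X) (r : ι → ℝ) :
    μ (⋃ i ∈ I, closedBall (c i) (r i)) ≠ ⊤ :=
  (I.isCompact_biUnion fun _ _ => isCompact_closedBall _ _).measure_lt_top.ne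

lemma closedBall_subset_biUnion_closedBall_one [NormedSpace ℝ X] {t : ℝ} (ht : t ≤ 2) {F : Finset X}
    (hF : closedBall (0 : X) 1 ⊆ ⋃ x ∈ F, ball x (1 - t / 2)) :
    closedBall (0 : X) t ⊆ ⋃ x ∈ F, closedBall x 1 := by
  intro x hx
  rw [mem_closedBall_zero_iff] at hx
  have hx2 : (2⁻¹ : ℝ) • x ∈ closedBall (0 : X) 1 := by
    rw [mem_closedBall_zero_iff, norm_smul]; norm_num; linarith
  obtain ⟨y, hy, hxy⟩ := mem_iUnion₂.1 (hF hx2)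
  refine mem_iUnion₂.2 ⟨y, hy, ?_⟩
  rw [mem_ball] at hxy
  have : dist x ((2⁻¹ : ℝ) • x) = 2⁻¹ * ‖x‖ := by
    rw [dist_eq_norm, ← norm_smul_of_nonneg (by norm_num : (0 : ℝ) ≤ 2⁻¹)]; congr 1; module
  rw [mem_closedBall]
  linarith [dist_triangle x ((2⁻¹ : ℝ) • x) y]

end Balls

lemma mul_measure_union_diff_biUnion_le {X ι : Type*} [MeasurableSpace X] [DecidableEq ι]
    (μ : Measure X) {U V : Set X} {T S : Finset ι} {B E : ι → Set X} (g : ℝ≥0∞)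
    (hU : g * μ (U \ ⋃ t ∈ T, E t) ≤ μ (⋃ t ∈ T, B t))
    (hV : g * μ (V \ ⋃ t ∈ T, E t) ≤ μ (⋃ s ∈ S, B s))
    (hST : ∀ s ∈ S, ∀ t ∈ T, Disjoint (B s) (B t)) (hB : ∀ s ∈ S, MeasurableSet (B s)) :
    g * μ ((U ∪ V) \ ⋃ t ∈ T ∪ S, E t) ≤ μ (⋃ t ∈ T ∪ S, B t) := by
  have hcover : (U ∪ V) \ ⋃ t ∈ T ∪ S, E t ⊆ (U \ ⋃ t ∈ T, E t) ∪ (V \ ⋃ t ∈ T, E t) := by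
    rw [Finset.set_biUnion_union]
    rintro x ⟨hxU | hxV, hxT⟩
    · exact Or.inl ⟨hxU, fun h => hxT (Or.inl h)⟩
    · exact Or.inr ⟨hxV, fun h => hxT (Or.inl h)⟩
  have hdisj : Disjoint (⋃ t ∈ T, B t) (⋃ s ∈ S, B s) :=
    disjoint_iUnion₂_left.2 fun t ht => disjoint_iUnion₂_right.2 fun s hs => (hST s hs t ht).symm
  calc _ ≤ g * (μ (U \ ⋃ t ∈ T, E t) + μ (V \ ⋃ t ∈ T, E t)) := by
        gcongr; exact (measure_mono hcover).trans (measure_union_le _ _)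
    _ ≤ μ (⋃ t ∈ T, B t) + μ (⋃ s ∈ S, B s) := by rw [mul_add]; exact add_le_add hU hV
    _ = _ := by rw [Finset.set_biUnion_union, measure_union hdisj (S.measurableSet_biUnion hB)]

lemma exists_measure_biUnion_le_card_mul {X ι β : Type*} [MeasurableSpace X] [Fintype β]
    [Nonempty β] [DecidableEq β] (μ : Measure X) (I : Finset ι) (B : ι → Set X) (k : ι → β) :
    ∃ b, μ (⋃ i ∈ I, B i) ≤ Fintype.card β * μ (⋃ i ∈ I.filter (k · = b), B i) := by
  obtain ⟨b, -, hb⟩ := Finset.exists_max_image Finset.univ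
    (fun b => μ (⋃ i ∈ I.filter (k · = b), B i)) Finset.univ_nonempty
  refine ⟨b, ?_⟩
  calc μ (⋃ i ∈ I, B i) = μ (⋃ b', ⋃ i ∈ I.filter (k · = b'), B i) := by
        congr 1; ext x; simp
    _ ≤ ∑ b', μ (⋃ i ∈ I.filter (k · = b'), B i) := measure_iUnion_fintype_le _ _
    _ ≤ ∑ _b' : β, μ (⋃ i ∈ I.filter (k · = b), B i) :=
        Finset.sum_le_sum fun b' _ => hb b' (Finset.mem_univ b')
    _ = _ := by rw [Finset.sum_const, nsmul_eq_mul, Finset.card_univ]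

lemma two_mul_div_pow_le_mul_div_pow_of_modEq {q R ε : ℝ} {k m n : ℕ} (hq : 1 ≤ q) (hR : 0 < R)
    (hε : 2 ≤ ε * q ^ k) (hmn : m ≡ n [MOD k]) (h : R / q ^ n < R / q ^ m) :
    2 * (R / q ^ n) ≤ ε * (R / q ^ m) := by
  have hq0 : 0 < q := zero_lt_one.trans_le hq
  have hε0 : 0 ≤ ε := by nlinarith [pow_pos hq0 k]
  have hlt : m < n := by
    by_contra! hle
    exact h.not_ge (div_le_div_of_nonneg_left hR.le (by positivity) (pow_le_pow_right₀ hq hle))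
  have hk : m + k ≤ n := by
    rcases Nat.eq_zero_or_pos k with rfl | hk0
    · omega
    have := Nat.le_of_dvd (Nat.sub_pos_of_lt hlt) ((Nat.modEq_iff_dvd' hlt.le).1 hmn)
    omega
  have hgap : q ^ k * (R / q ^ n) ≤ R / q ^ m := by
    rw [mul_div_assoc', div_le_div_iff₀ (by positivity) (by positivity)]
    calc q ^ k * R * q ^ m = R * q ^ (m + k) := by ring
      _ ≤ R * q ^ n := by gcongr
  calc 2 * (R / q ^ n) ≤ ε * q ^ k * (R / q ^ n) := by gcongr
    _ ≤ ε * (R / q ^ m) := by rw [mul_assoc]; gcongr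

lemma exists_pow_grid_rounding {ι : Type*} {q : ℝ} (hq : 1 < q) (I : Finset ι) (r : ι → ℝ)
    (hr : ∀ i ∈ I, 0 < r i) :
    ∃ R > 0, ∃ n : ι → ℕ, ∀ i ∈ I, r i ≤ R / q ^ n i ∧ R / q ^ n i ≤ q * r i := by
  rcases I.eq_empty_or_nonempty with rfl | hI
  · exact ⟨1, one_pos, fun _ => 0, by simp⟩
  set R := I.sup' hI r
  have hscale (i : ι) (hi : i ∈ I) : ∃ n : ℕ, q ^ n ≤ R / r i ∧ R / r i < q ^ (n + 1) :=
    exists_nat_pow_near ((one_le_div (hr i hi)).2 (I.le_sup' r hi)) hq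
  choose! n hn using hscale
  refine ⟨R, hI.elim fun i hi => (hr i hi).trans_le (I.le_sup' r hi), n, fun i hi => ?_⟩
  obtain ⟨h1, h2⟩ := hn i hi
  have hqn : 0 < q ^ n i := pow_pos (zero_lt_one.trans hq) _
  rw [le_div_iff₀ (hr i hi)] at h1
  rw [div_lt_iff₀ (hr i hi), pow_succ] at h2
  exact ⟨(le_div_iff₀ hqn).2 (by linarith), (div_le_iff₀ hqn).2 (by linarith)⟩

section HaarMeasure

variable {X : Type*} [NormedAddCommGroup X] [NormedSpace ℝ X] [FiniteDimensional ℝ X]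
  [MeasurableSpace X] [BorelSpace X] (μ : Measure X) [μ.IsAddHaarMeasure]

theorem exists_pairwiseDisjoint_ofReal_vitaliGamma_mul_le {ι : Type*} (I : Finset ι) (c : ι → X)
    {r : ℝ} (hr : 0 < r) :
    ∃ S ⊆ I, (S : Set ι).PairwiseDisjoint (fun i => closedBall (c i) r) ∧
      ENNReal.ofReal (vitaliGamma μ {1}) * μ (⋃ i ∈ I, closedBall (c i) r)
        ≤ μ (⋃ i ∈ S, closedBall (c i) r) := by
  classical
  set f : ι → X × ℝ := fun i => (r⁻¹ • c i, 1)
  have hmeasure (J : Finset ι) : μ (⋃ i ∈ J, closedBall (c i) r)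
      = ENNReal.ofReal (r ^ Module.finrank ℝ X) * ENNReal.ofReal (ballsUnion μ (J.image f)) := by
    have hunion : ⋃ i ∈ J, closedBall (c i) r = r • ⋃ p ∈ J.image f, closedBall p.1 p.2 := by
      simp only [Finset.set_biUnion_finset_image, Set.smul_set_iUnion₂, f]
      exact Set.iUnion₂_congr fun i _ => closedBall_eq_smul_closedBall_one (c i) hr
    rw [hunion, Measure.addHaar_smul_of_nonneg μ hr.le, ballsUnion,
      ENNReal.ofReal_toReal (measure_biUnion_closedBall_ne_top μ _ Prod.fst Prod.snd)]
  obtain ⟨S₀, hS₀, hdisj, hγ⟩ :=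
    exists_disjointBalls_vitaliGamma_mul_le (R := {1}) μ (I.image f) (by simp [f])
  obtain ⟨S, hSI, hinj, rfl⟩ := Finset.exists_subset_injOn_image_eq_of_surjOn (I : Set ι) S₀
    fun p hp => by simpa using hS₀ hp
  refine ⟨S, by exact_mod_cast hSI, fun i hi j hj hij => ?_, ?_⟩
  · have := hdisj (Finset.mem_coe.2 (Finset.mem_image_of_mem f hi))
      (Finset.mem_coe.2 (Finset.mem_image_of_mem f hj)) (hinj.ne hi hj hij)
    rw [Function.onFun, closedBall_eq_smul_closedBall_one (c i) hr,
      closedBall_eq_smul_closedBall_one (c j) hr, ← Set.image_smul, ← Set.image_smul]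
    exact Set.disjoint_image_of_injective (smul_right_injective X hr.ne') this
  · rw [hmeasure, hmeasure, mul_left_comm, ← ENNReal.ofReal_mul (vitaliGamma_nonneg μ _)]
    gcongr

lemma measure_biUnion_closedBall_le_of_le_mul {ι : Type*} (T : Finset ι) (c : ι → X)
    {r r' : ι → ℝ} {t : ℝ} (ht : 0 ≤ t) (hr : ∀ i ∈ T, 0 ≤ r i) (hr' : ∀ i ∈ T, r' i ≤ t * r i)
    (hT : (T : Set ι).PairwiseDisjoint fun i => closedBall (c i) (r i)) :
    μ (⋃ i ∈ T, closedBall (c i) (r' i))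
      ≤ ENNReal.ofReal (t ^ Module.finrank ℝ X) * μ (⋃ i ∈ T, closedBall (c i) (r i)) := by
  rw [measure_biUnion_finset hT fun _ _ => measurableSet_closedBall, Finset.mul_sum]
  refine (measure_biUnion_finset_le _ _).trans (Finset.sum_le_sum fun i hi => ?_)
  calc μ (closedBall (c i) (r' i)) ≤ μ (closedBall (c i) (t * r i)) :=
        measure_mono (closedBall_subset_closedBall (hr' i hi))
    _ = _ := by
      rw [Measure.addHaar_closedBall μ _ (mul_nonneg ht (hr i hi)),
        Measure.addHaar_closedBall μ _ (hr i hi), ← mul_assoc,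
        ← ENNReal.ofReal_mul (by positivity), mul_pow]

lemma exists_greedy_step {ι : Type*} (c : ι → X) (ρ : ι → ℝ) {ε r : ℝ} (hr : 0 < r)
    (T A : Finset ι) (hA : ∀ i ∈ A, ρ i = r) (hT : ∀ i ∈ A, ∀ t ∈ T, 2 * ρ i ≤ ε * ρ t) :
    ∃ S ⊆ A, (S : Set ι).PairwiseDisjoint (fun i => closedBall (c i) (ρ i)) ∧
      (∀ s ∈ S, ∀ t ∈ T, Disjoint (closedBall (c s) (ρ s)) (closedBall (c t) (ρ t))) ∧
      ENNReal.ofReal (vitaliGamma μ {1}) *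
          μ ((⋃ i ∈ A, closedBall (c i) (ρ i)) \ ⋃ t ∈ T, closedBall (c t) ((1 + ε) * ρ t))
        ≤ μ (⋃ s ∈ S, closedBall (c s) (ρ s)) := by
  classical
  set G := A.filter fun i => ∀ t ∈ T, Disjoint (closedBall (c i) (ρ i)) (closedBall (c t) (ρ t))
  obtain ⟨S, hSG, hS, hγ⟩ := exists_pairwiseDisjoint_ofReal_vitaliGamma_mul_le μ G c hr
  have hGA : G ⊆ A := Finset.filter_subset _ _
  have hunion (B : Finset ι) (hB : B ⊆ A) :
      ⋃ i ∈ B, closedBall (c i) r = ⋃ i ∈ B, closedBall (c i) (ρ i) :=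
    iUnion₂_congr fun i hi => by rw [hA i (hB hi)]
  -- a ball of `A` meeting a ball of `T` is swallowed by the enlargement of the latter
  have hcover : (⋃ i ∈ A, closedBall (c i) (ρ i)) \ ⋃ t ∈ T, closedBall (c t) ((1 + ε) * ρ t)
      ⊆ ⋃ i ∈ G, closedBall (c i) (ρ i) := by
    rintro x ⟨hx, hxT⟩
    obtain ⟨i, hi, hxi⟩ := mem_iUnion₂.1 hx
    refine mem_iUnion₂.2 ⟨i, Finset.mem_filter.2 ⟨hi, fun t ht => ?_⟩, hxi⟩
    by_contra hit
    refine hxT (mem_iUnion₂.2 ⟨t, ht, closedBall_subset_closedBall ?_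
      (closedBall_subset_closedBall_of_not_disjoint hit hxi)⟩)
    linarith [hT i hi t ht]
  refine ⟨S, hSG.trans hGA, fun i hi j hj hij => ?_, fun s hs => (Finset.mem_filter.1 (hSG hs)).2,
    ?_⟩
  · simpa only [Function.onFun, hA i (hGA (hSG hi)), hA j (hGA (hSG hj))] using hS hi hj hij
  · calc _ ≤ ENNReal.ofReal (vitaliGamma μ {1}) * μ (⋃ i ∈ G, closedBall (c i) r) := by
          rw [hunion G hGA]; gcongr
      _ ≤ _ := hγ
      _ = _ := by rw [hunion S (hSG.trans hGA)]

theorem exists_pairwiseDisjoint_of_lacunary {ι : Type*} (I : Finset ι) (c : ι → X) (ρ : ι → ℝ)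
    {ε : ℝ} (hρ : ∀ i ∈ I, 0 < ρ i)
    (hlac : ∀ i ∈ I, ∀ j ∈ I, ρ j < ρ i → 2 * ρ j ≤ ε * ρ i) :
    ∃ T ⊆ I, (T : Set ι).PairwiseDisjoint (fun i => closedBall (c i) (ρ i)) ∧
      ENNReal.ofReal (vitaliGamma μ {1}) *
          μ ((⋃ i ∈ I, closedBall (c i) (ρ i)) \ ⋃ t ∈ T, closedBall (c t) ((1 + ε) * ρ t))
        ≤ μ (⋃ t ∈ T, closedBall (c t) (ρ t)) := by
  classical
  -- balls are selected radius by radius, from the largest radius down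
  suffices key : ∀ J : Finset ℝ, (∀ r ∈ J, 0 < r) →
      ∃ T ⊆ I.filter (ρ · ∈ J), (T : Set ι).PairwiseDisjoint (fun i => closedBall (c i) (ρ i)) ∧
        ENNReal.ofReal (vitaliGamma μ {1}) *
            μ ((⋃ i ∈ I.filter (ρ · ∈ J), closedBall (c i) (ρ i)) \
              ⋃ t ∈ T, closedBall (c t) ((1 + ε) * ρ t))
          ≤ μ (⋃ t ∈ T, closedBall (c t) (ρ t)) by
    have hI : I.filter (ρ · ∈ I.image ρ) = I :=
      Finset.filter_true_of_mem fun i hi => Finset.mem_image_of_mem ρ hi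
    simpa only [hI] using key (I.image ρ) (by simpa using hρ)
  intro J
  induction J using Finset.induction_on_min with
  | empty => exact fun _ => ⟨∅, by simp, by simp, by simp⟩
  | insert r J hrJ ih =>
    intro hJ
    obtain ⟨T, hTJ, hT, hγT⟩ := ih fun x hx => hJ x (Finset.mem_insert_of_mem hx)
    set A := I.filter (ρ · = r)
    obtain ⟨S, hSA, hS, hST, hγS⟩ := exists_greedy_step μ c ρ (ε := ε)
      (hJ r (Finset.mem_insert_self r J)) T A (fun i hi => (Finset.mem_filter.1 hi).2)
      fun i hi t ht => by
        obtain ⟨hiI, rfl⟩ := Finset.mem_filter.1 hi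
        obtain ⟨htI, htJ⟩ := Finset.mem_filter.1 (hTJ ht)
        exact hlac t htI i hiI (hrJ _ htJ)
    have hsplit : I.filter (ρ · ∈ insert r J) = A ∪ I.filter (ρ · ∈ J) := by
      ext i; simp only [Finset.mem_filter, Finset.mem_union, Finset.mem_insert, A]; tauto
    refine ⟨T ∪ S, ?_, ?_, ?_⟩
    · rw [hsplit]
      exact Finset.union_subset (hTJ.trans Finset.subset_union_right)
        (hSA.trans Finset.subset_union_left)
    · rw [Finset.coe_union]
      exact Set.pairwiseDisjoint_union.2
        ⟨hT, hS, fun i hi j hj _ => (hST j hj i hi).symm⟩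
    · rw [hsplit, Finset.set_biUnion_union, union_comm]
      exact mul_measure_union_diff_biUnion_le μ _ hγT hγS hST
        fun _ _ => measurableSet_closedBall

theorem exists_pairwiseDisjoint_ofReal_mul_le_of_lacunary {ι : Type*} (I : Finset ι)
    (c : ι → X) (ρ : ι → ℝ) {ε : ℝ} (hε : 0 ≤ ε) (hρ : ∀ i ∈ I, 0 < ρ i)
    (hlac : ∀ i ∈ I, ∀ j ∈ I, ρ j < ρ i → 2 * ρ j ≤ ε * ρ i) :
    ∃ T ⊆ I, (T : Set ι).PairwiseDisjoint (fun i => closedBall (c i) (ρ i)) ∧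
      ENNReal.ofReal (vitaliGamma μ {1}) * μ (⋃ i ∈ I, closedBall (c i) (ρ i))
        ≤ ENNReal.ofReal (1 + vitaliGamma μ {1} * (1 + ε) ^ Module.finrank ℝ X) *
          μ (⋃ t ∈ T, closedBall (c t) (ρ t)) := by
  obtain ⟨T, hTI, hT, hγT⟩ := exists_pairwiseDisjoint_of_lacunary μ I c ρ hρ hlac
  refine ⟨T, hTI, hT, ?_⟩
  set g := ENNReal.ofReal (vitaliGamma μ {1})
  set U := ⋃ i ∈ I, closedBall (c i) (ρ i)
  set W := ⋃ t ∈ T, closedBall (c t) ((1 + ε) * ρ t)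
  have hW : μ W ≤ ENNReal.ofReal ((1 + ε) ^ Module.finrank ℝ X) *
      μ (⋃ t ∈ T, closedBall (c t) (ρ t)) :=
    measure_biUnion_closedBall_le_of_le_mul μ T c (by linarith)
      (fun t ht => (hρ t (hTI ht)).le) (fun _ _ => le_rfl) hT
  calc g * μ U ≤ g * (μ (U \ W) + μ W) := by
        gcongr; exact (measure_mono (subset_sdiff_union U W)).trans (measure_union_le _ _)
    _ ≤ μ (⋃ t ∈ T, closedBall (c t) (ρ t)) +
          g * (ENNReal.ofReal ((1 + ε) ^ Module.finrank ℝ X) *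
            μ (⋃ t ∈ T, closedBall (c t) (ρ t))) := by
        rw [mul_add]; gcongr
    _ = _ := by
        rw [← mul_assoc, ← one_add_mul, ENNReal.ofReal_add zero_le_one (by
          have := vitaliGamma_nonneg μ {1}; positivity), ENNReal.ofReal_one,
          ENNReal.ofReal_mul (vitaliGamma_nonneg μ {1})]

theorem exists_disjointBalls_ofReal_mul_le {q ε : ℝ} (m : ℕ) [NeZero m] (hq : 1 < q)
    (hε : 0 ≤ ε) (hqm : 2 ≤ ε * q ^ m) (C : Finset (X × ℝ)) (hC : ∀ p ∈ C, 0 < p.2) :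
    ∃ T ⊆ C, DisjointBalls T ∧
      ENNReal.ofReal (vitaliGamma μ {1}) * μ (⋃ p ∈ C, closedBall p.1 p.2)
        ≤ ENNReal.ofReal (m * (1 + vitaliGamma μ {1} * (1 + ε) ^ Module.finrank ℝ X) *
            q ^ Module.finrank ℝ X) * μ (⋃ p ∈ T, closedBall p.1 p.2) := by
  classical
  obtain ⟨R, hR, n, hρ⟩ := exists_pow_grid_rounding hq C Prod.snd hC
  set ρ : X × ℝ → ℝ := fun p => R / q ^ n p
  obtain ⟨b, hb⟩ := exists_measure_biUnion_le_card_mul μ C (fun p => closedBall p.1 p.2)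
    (fun p => (n p : ZMod m))
  set D := C.filter fun p => (n p : ZMod m) = b
  have hDC : D ⊆ C := Finset.filter_subset _ _
  have hlac : ∀ i ∈ D, ∀ j ∈ D, ρ j < ρ i → 2 * ρ j ≤ ε * ρ i := fun i hi j hj =>
    two_mul_div_pow_le_mul_div_pow_of_modEq hq.le hR hqm <| (ZMod.natCast_eq_natCast_iff _ _ _).1
      ((Finset.mem_filter.1 hi).2.trans (Finset.mem_filter.1 hj).2.symm)
  obtain ⟨T, hTD, hT, hγT⟩ := exists_pairwiseDisjoint_ofReal_mul_le_of_lacunary μ D Prod.fst ρ hε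
    (fun p hp => (hC p (hDC hp)).trans_le (hρ p (hDC hp)).1) hlac
  have hTC : T ⊆ C := hTD.trans hDC
  have hTdisj : DisjointBalls T := fun i hi j hj hij => (hT hi hj hij).mono
    (closedBall_subset_closedBall (hρ i (hTC hi)).1)
    (closedBall_subset_closedBall (hρ j (hTC hj)).1)
  refine ⟨T, hTC, hTdisj, ?_⟩
  have hTq : μ (⋃ p ∈ T, closedBall p.1 (ρ p))
      ≤ ENNReal.ofReal (q ^ Module.finrank ℝ X) * μ (⋃ p ∈ T, closedBall p.1 p.2) :=
    measure_biUnion_closedBall_le_of_le_mul μ T Prod.fst (zero_le_one.trans hq.le)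
      (fun p hp => (hC p (hTC hp)).le) (fun p hp => (hρ p (hTC hp)).2) hTdisj
  have hCD : μ (⋃ p ∈ C, closedBall p.1 p.2) ≤ m * μ (⋃ p ∈ D, closedBall p.1 (ρ p)) := by
    refine hb.trans ?_
    rw [ZMod.card]
    gcongr with p hp
    exact (hρ p (hDC hp)).1
  calc _ ≤ ENNReal.ofReal (vitaliGamma μ {1}) * (m * μ (⋃ p ∈ D, closedBall p.1 (ρ p))) := by
        gcongr
    _ = m * (ENNReal.ofReal (vitaliGamma μ {1}) * μ (⋃ p ∈ D, closedBall p.1 (ρ p))) := by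
        ring
    _ ≤ m * (ENNReal.ofReal (1 + vitaliGamma μ {1} * (1 + ε) ^ Module.finrank ℝ X) *
          (ENNReal.ofReal (q ^ Module.finrank ℝ X) * μ (⋃ p ∈ T, closedBall p.1 p.2))) :=
        mul_le_mul_right (hγT.trans (mul_le_mul_right hTq _)) _
    _ = _ := by
        rw [ENNReal.ofReal_mul (by have := vitaliGamma_nonneg μ {1}; positivity),
          ENNReal.ofReal_mul (by positivity), ENNReal.ofReal_natCast]
        ring

theorem div_le_vitaliGamma_Ioi {q ε : ℝ} (m : ℕ) [NeZero m] (hq : 1 < q) (hε : 0 ≤ ε)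
    (hqm : 2 ≤ ε * q ^ m) :
    vitaliGamma μ {1} /
        (m * (1 + vitaliGamma μ {1} * (1 + ε) ^ Module.finrank ℝ X) * q ^ Module.finrank ℝ X)
      ≤ vitaliGamma μ (Ioi 0) := by
  have : Nonempty {C : Finset (X × ℝ) // C.Nonempty ∧ ∀ p ∈ C, p.2 ∈ Ioi 0} :=
    ⟨⟨{(0, 1)}, by simp, by simp⟩⟩
  refine le_ciInf fun ⟨C, ⟨p, hp⟩, hC⟩ => ?_
  obtain ⟨T, hTC, hT, hle⟩ := exists_disjointBalls_ofReal_mul_le μ m hq hε hqm C hC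
  have hγ := vitaliGamma_nonneg μ {1}
  have hκ : 0 < (m : ℝ) * (1 + vitaliGamma μ {1} * (1 + ε) ^ Module.finrank ℝ X) *
      q ^ Module.finrank ℝ X := by
    have := NeZero.pos m
    have := zero_lt_one.trans hq
    positivity
  have hUC : 0 < ballsUnion μ C :=
    ENNReal.toReal_pos ((measure_closedBall_pos μ p.1 (hC p hp)).trans_le
      (measure_mono (subset_biUnion_of_mem (u := fun p : X × ℝ => closedBall p.1 p.2) hp))).ne'
      (measure_biUnion_closedBall_ne_top μ C Prod.fst Prod.snd)
  have hreal := ENNReal.toReal_mono (ENNReal.mul_ne_top ENNReal.ofReal_ne_top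
    (measure_biUnion_closedBall_ne_top μ T Prod.fst Prod.snd)) hle
  rw [ENNReal.toReal_mul, ENNReal.toReal_mul, ENNReal.toReal_ofReal hγ,
    ENNReal.toReal_ofReal hκ.le] at hreal
  calc _ ≤ ballsUnion μ T / ballsUnion μ C := by
        rw [div_le_div_iff₀ hκ hUC]; unfold ballsUnion; linarith
    _ ≤ Phi μ C := div_ballsUnion_le_Phi μ hTC hT

lemma ballsUnion_le_of_mem_closedBall {S : Finset (X × ℝ)} (hS : DisjointBalls S)
    (h1 : ∀ p ∈ S, p.2 = 1) {x : X} (hx : ∀ p ∈ S, x ∈ closedBall p.1 p.2) :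
    ballsUnion μ S ≤ (μ (closedBall (0 : X) 1)).toReal := by
  have hcard : S.card ≤ 1 := Finset.card_le_one.2 fun p hp p' hp' => by
    by_contra hne
    exact Set.disjoint_left.1 (hS hp hp' hne) (hx p hp) (hx p' hp')
  refine ENNReal.toReal_mono measure_closedBall_lt_top.ne ?_
  calc μ (⋃ p ∈ S, closedBall p.1 p.2) ≤ ∑ p ∈ S, μ (closedBall p.1 p.2) :=
        measure_biUnion_finset_le _ _
    _ = S.card • μ (closedBall (0 : X) 1) := by
        rw [← Finset.sum_const]
        exact Finset.sum_congr rfl fun p hp => by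
          rw [h1 p hp, Measure.addHaar_closedBall_center]
    _ ≤ 1 • μ (closedBall (0 : X) 1) := by gcongr
    _ = _ := one_nsmul _

lemma vitaliGamma_mul_pow_le_one_of_lt_two {t : ℝ} (ht0 : 0 ≤ t) (ht : t < 2) :
    vitaliGamma μ {1} * t ^ Module.finrank ℝ X ≤ 1 := by
  classical
  obtain ⟨F, hF, hcov⟩ := (isCompact_closedBall (0 : X) 1).elim_nhds_subcover
    (fun x => ball x (1 - t / 2)) fun x _ => ball_mem_nhds x (by linarith)
  set C := F.image fun x => (x, (1 : ℝ))
  have hC : ∀ p ∈ C, p.2 = 1 := by simp [C]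
  obtain ⟨S, hSC, hS, hγ⟩ := exists_disjointBalls_vitaliGamma_mul_le (R := {1}) μ C hC
  have hS1 := ballsUnion_le_of_mem_closedBall μ hS (fun p hp => hC p (hSC hp)) (x := 0)
    fun p hp => by
      obtain ⟨x, hx, rfl⟩ := Finset.mem_image.1 (hSC hp)
      simpa [dist_comm] using hF x hx
  have hB : 0 < (μ (closedBall (0 : X) 1)).toReal :=
    ENNReal.toReal_pos (measure_closedBall_pos μ 0 one_pos).ne' measure_closedBall_lt_top.ne
  have hUC : t ^ Module.finrank ℝ X * (μ (closedBall (0 : X) 1)).toReal ≤ ballsUnion μ C := by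
    have hcover : closedBall (0 : X) t ⊆ ⋃ p ∈ C, closedBall p.1 p.2 := by
      simpa [C, Finset.set_biUnion_finset_image] using
        closedBall_subset_biUnion_closedBall_one ht.le hcov
    have := ENNReal.toReal_mono (measure_biUnion_closedBall_ne_top μ C Prod.fst Prod.snd)
      (measure_mono hcover)
    rwa [Measure.addHaar_closedBall' μ 0 ht0, ENNReal.toReal_mul,
      ENNReal.toReal_ofReal (by positivity)] at this
  refine le_of_mul_le_mul_right ?_ hB
  calc _ = vitaliGamma μ {1} * (t ^ Module.finrank ℝ X * (μ (closedBall (0 : X) 1)).toReal) :=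
        mul_assoc _ _ _
    _ ≤ vitaliGamma μ {1} * ballsUnion μ C := by
        have := vitaliGamma_nonneg μ {1}; gcongr
    _ ≤ _ := hγ.trans hS1
    _ = _ := (one_mul _).symm

lemma vitaliGamma_mul_two_pow_le_one : vitaliGamma μ {1} * 2 ^ Module.finrank ℝ X ≤ 1 :=
  le_of_tendsto ((continuous_const.mul (continuous_pow _)).tendsto 2 |>.mono_left
    nhdsWithin_le_nhds) (Filter.eventually_of_mem (Ioo_mem_nhdsLT two_pos) fun _ ht =>
      vitaliGamma_mul_pow_le_one_of_lt_two μ ht.1.le ht.2)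

end HaarMeasure

noncomputable def vitaliConst (γ : ℝ) (d K : ℕ) : ℝ :=
  (K + 1) * (1 + γ * (1 + (K : ℝ)⁻¹) ^ d) * ((2 * (K : ℝ)) ^ (1 / ((K : ℝ) + 1))) ^ d

lemma vitaliConst_pos {γ : ℝ} (hγ : 0 ≤ γ) (d : ℕ) {K : ℕ} (hK : 1 ≤ K) :
    0 < vitaliConst γ d K := by
  have hK' : (1 : ℝ) ≤ K := by exact_mod_cast hK
  have : 0 < (2 * (K : ℝ)) ^ (1 / ((K : ℝ) + 1)) := Real.rpow_pos_of_pos (by linarith) _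
  unfold vitaliConst
  positivity

theorem div_vitaliConst_le_vitaliGamma_Ioi {X : Type*} [NormedAddCommGroup X] [NormedSpace ℝ X]
    [FiniteDimensional ℝ X] [MeasurableSpace X] [BorelSpace X] (μ : Measure X)
    [μ.IsAddHaarMeasure] {K : ℕ} (hK : 1 ≤ K) :
    vitaliGamma μ {1} / vitaliConst (vitaliGamma μ {1}) (Module.finrank ℝ X) K
      ≤ vitaliGamma μ (Ioi 0) := by
  have hK' : (1 : ℝ) ≤ K := by exact_mod_cast hK
  have hq : ((2 * (K : ℝ)) ^ (1 / ((K : ℝ) + 1))) ^ (K + 1) = 2 * K := by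
    rw [show 1 / ((K : ℝ) + 1) = ((K + 1 : ℕ) : ℝ)⁻¹ by push_cast; ring]
    exact Real.rpow_inv_natCast_pow (by positivity) K.succ_ne_zero
  have := div_le_vitaliGamma_Ioi μ (K + 1) (q := (2 * (K : ℝ)) ^ (1 / ((K : ℝ) + 1)))
    (ε := (K : ℝ)⁻¹) (Real.one_lt_rpow (by linarith) (by positivity))
    (inv_nonneg.2 (Nat.cast_nonneg K))
    (by rw [hq, mul_comm 2, inv_mul_cancel_left₀ (by positivity)])
  push_cast at this
  exact this

lemma vitaliConst_self_le {γ : ℝ} {d L : ℕ} (hγL : γ * (L + 1) ≤ 1) :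
    vitaliConst γ d L ≤ (L + 2) * ((2 * (L : ℝ)) ^ (1 / ((L : ℝ) + 1)) * (1 + (L : ℝ)⁻¹)) ^ d := by
  set A := (1 + (L : ℝ)⁻¹) ^ d
  have hA : 1 ≤ A := one_le_pow₀ (le_add_of_nonneg_right (by positivity))
  have : (L + 1) * (1 + γ * A) ≤ (L + 2) * A := by nlinarith
  rw [vitaliConst, mul_pow]
  calc _ ≤ (L + 2) * A * ((2 * (L : ℝ)) ^ (1 / ((L : ℝ) + 1))) ^ d := by gcongr
    _ = _ := by ring

lemma vitaliConst_one_le {γ : ℝ} {d L : ℕ} (hγ : γ * 2 ^ d ≤ 1) (hd : 2 ≤ d)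
    (hL : (2 : ℝ) ^ d ≤ L) :
    vitaliConst γ d 1 ≤ (L + 2) * ((2 * (L : ℝ)) ^ (1 / ((L : ℝ) + 1)) * (1 + (L : ℝ)⁻¹)) ^ d := by
  have hL1 : (1 : ℝ) ≤ L := le_trans (one_le_pow₀ one_le_two) hL
  have hQ : 1 ≤ ((2 * (L : ℝ)) ^ (1 / ((L : ℝ) + 1))) ^ d :=
    one_le_pow₀ (Real.one_le_rpow (by linarith) (by positivity))
  have hbern : L + 4 ≤ (L + 2) * (1 + (L : ℝ)⁻¹) ^ d := by
    have := mul_le_mul_of_nonneg_left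
      (one_add_mul_le_pow (a := (L : ℝ)⁻¹) (by linarith [inv_nonneg.2 (zero_le_one.trans hL1)]) d)
      (by positivity : (0 : ℝ) ≤ L + 2)
    have hLL : (L : ℝ) * (L : ℝ)⁻¹ = 1 := mul_inv_cancel₀ (by positivity)
    have hd' : (2 : ℝ) ≤ d := by exact_mod_cast hd
    nlinarith [inv_nonneg.2 (zero_le_one.trans hL1)]
  have hsqrt : (2 * ((1 : ℕ) : ℝ)) ^ (1 / (((1 : ℕ) : ℝ) + 1)) = √2 := by
    rw [Real.sqrt_eq_rpow]; norm_num
  rw [vitaliConst, hsqrt, mul_pow]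
  calc (((1 : ℕ) : ℝ) + 1) * (1 + γ * (1 + ((1 : ℕ) : ℝ)⁻¹) ^ d) * √2 ^ d
        = 2 * (1 + γ * 2 ^ d) * √2 ^ d := by norm_num
    _ ≤ 4 * √2 ^ d := by gcongr; linarith
    _ ≤ (√2 ^ d) ^ 2 + 4 := by nlinarith [sq_nonneg (√2 ^ d - 2)]
    _ = 2 ^ d + 4 := by rw [← pow_mul, mul_comm, pow_mul, Real.sq_sqrt zero_le_two]
    _ ≤ (L + 2) * (1 + (L : ℝ)⁻¹) ^ d := by linarith
    _ ≤ _ := by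
        gcongr; exact le_mul_of_one_le_left (by positivity) hQ

lemma exists_vitaliConst_le {γ : ℝ} {d L : ℕ} (hγ0 : 0 ≤ γ) (hγ : γ * 2 ^ d ≤ 1) (hd : 2 ≤ d)
    (hL : 1 ≤ L) :
    ∃ K : ℕ, 1 ≤ K ∧
      vitaliConst γ d K ≤ (L + 2) * ((2 * (L : ℝ)) ^ (1 / ((L : ℝ) + 1)) * (1 + (L : ℝ)⁻¹)) ^ d := by
  by_cases hγL : γ * (L + 1) ≤ 1
  · exact ⟨L, hL, vitaliConst_self_le hγL⟩
  refine ⟨1, le_rfl, vitaliConst_one_le hγ hd ?_⟩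
  have : (2 : ℝ) ^ d < L + 1 := lt_of_mul_lt_mul_left (hγ.trans_lt (not_le.1 hγL)) hγ0
  exact_mod_cast Nat.lt_succ_iff.1 (by exact_mod_cast this)

/-- Approximate reduction to unit scale: if `X` is a normed space of dimension `d ≥ 2` and
`L` a positive integer, then `Γ(X) ≥ (L+2)⁻¹·((2L)^{1/(L+1)}·(1+L⁻¹))^{-d}·γ(X)`. -/
theorem stmt_16 {X : Type*} [NormedAddCommGroup X] [NormedSpace ℝ X] [FiniteDimensional ℝ X]
    [MeasurableSpace X] [BorelSpace X] (μ : Measure X) [μ.IsAddHaarMeasure]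
    (d : ℕ) (hd : Module.finrank ℝ X = d) (h2 : 2 ≤ d) (L : ℕ) (hL : 1 ≤ L) :
    ((L : ℝ) + 2)⁻¹ * (((2 * (L : ℝ)) ^ (1 / ((L : ℝ) + 1)) * (1 + (L : ℝ)⁻¹))⁻¹) ^ d *
        vitaliGamma μ {1}
      ≤ vitaliGamma μ (Set.Ioi 0) := by
  subst hd
  have hγ := vitaliGamma_nonneg μ {1}
  obtain ⟨K, hK, hle⟩ := exists_vitaliConst_le hγ (vitaliGamma_mul_two_pow_le_one μ) h2 hL
  calc _ = vitaliGamma μ {1} / (((L : ℝ) + 2) *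
        ((2 * (L : ℝ)) ^ (1 / ((L : ℝ) + 1)) * (1 + (L : ℝ)⁻¹)) ^ Module.finrank ℝ X) := by
        rw [inv_pow, div_eq_mul_inv (vitaliGamma μ {1}), mul_inv]; ring
    _ ≤ _ := div_le_div_of_nonneg_left hγ (vitaliConst_pos hγ _ hK) hle
    _ ≤ _ := div_vitaliConst_le_vitaliGamma_Ioi μ hK
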